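/- There exists a constant K1, depending only on b, such that for all finite subsets B, C ⊆ ℤ^b × {0,1}, every matrix M ∈ 𝓜^B_C and every s ≥ 0: ‖M‖_s ≤ K1 · max_{i ∈ proj(C)} ‖M_{{i}}‖_{s+b}, where M_{{i}} denotes the submatrix of M formed by the rows indexed by the sites (i,a) ∈ C (with all columns of B retained). -/
import Mathlib


open scoped BigOperators

namespace NLSPaper

abbrev Site (b : ℕ) := (Fin b → ℤ) × Bool

variable {b : ℕ}

/-- sup-norm of an integer vector -/
def znorm {b : ℕ} (i : Fin b → ℤ) : ℕ := Finset.univ.sup fun t => (i t).natAbs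

/-- ⟨i⟩ := max(|i|,1) -/
def wt {b : ℕ} (i : Fin b → ℤ) : ℕ := max (znorm i) 1

/-- distance between sites -/
def sdist {b : ℕ} (k k' : Site b) : ℕ :=
  max (znorm (k.1 - k'.1)) (if k.2 = k'.2 then 0 else 1)

/-- Frobenius norm of the 2×2 block of `M` at spatial indices `(i,i')`,
restricted to row set `C` and column set `B`. -/
noncomputable def blockNorm (B C : Finset (Site b)) (M : Site b → Site b → ℂ)
    (i i' : Fin b → ℤ) : NNReal :=
  NNReal.sqrt (∑ a : Bool, ∑ a' : Bool,
    if (i, a) ∈ C ∧ (i', a') ∈ B then ‖M (i, a) (i', a')‖₊ ^ 2 else 0)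

/-- `[M(n)]`: max of the block norms on the `n`-th diagonal. -/
noncomputable def decayCoef (B C : Finset (Site b)) (M : Site b → Site b → ℂ)
    (n : Fin b → ℤ) : NNReal :=
  ((((C.image Prod.fst) ×ˢ (B.image Prod.fst)).filter fun p => p.1 - p.2 = n).sup
    fun p => blockNorm B C M p.1 p.2)

/-- square of the `s`-norm of a matrix with column set `B` and row set `C` -/
noncomputable def sNormSq (K0 s : ℝ) (B C : Finset (Site b)) (M : Site b → Site b → ℂ) : ℝ :=
  K0 * ∑ n ∈ ((C.image Prod.fst) ×ˢ (B.image Prod.fst)).image (fun p => p.1 - p.2),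
    (decayCoef B C M n : ℝ) ^ 2 * (wt n : ℝ) ^ (2 * s)

/-- the `s`-norm of a matrix with column set `B` and row set `C` -/
noncomputable def sNorm (K0 s : ℝ) (B C : Finset (Site b)) (M : Site b → Site b → ℂ) : ℝ :=
  Real.sqrt (sNormSq K0 s B C M)

noncomputable def mAdd (M1 M2 : Site b → Site b → ℂ) : Site b → Site b → ℂ :=
  fun k k' => M1 k k' + M2 k k'

/-- product of matrices, relative to the middle index set `C` -/
noncomputable def mMul (C : Finset (Site b)) (M1 M2 : Site b → Site b → ℂ) : Site b → Site b → ℂ :=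
  fun k k' => ∑ q ∈ C, M1 k q * M2 q k'

/-- ℓ²-operator norm of a matrix with column set `B` and row set `C` -/
noncomputable def opNorm (B C : Finset (Site b)) (M : Site b → Site b → ℂ) : ℝ :=
  ‖LinearMap.toContinuousLinearMap
      (Matrix.toEuclideanLin
        (Matrix.of fun (k : {x // x ∈ C}) (k' : {x // x ∈ B}) => M k.1 k'.1))‖



lemma sum_inv_sq_le (N : ℕ) :
    ∑ k ∈ Finset.range N, (1:ℝ)/((k:ℝ)+1)^2 ≤ 2 - 2/((N:ℝ)+1) := by
  induction N with
  | zero => norm_num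
  | succ N ih =>
    rw [Finset.sum_range_succ]
    have hx : (0:ℝ) ≤ (N:ℝ) := Nat.cast_nonneg N
    have key : (1:ℝ)/((N:ℝ)+1)^2 ≤ 2/((N:ℝ)+1) - 2/((N:ℝ)+1+1) := by
      rw [div_sub_div _ _ (by positivity) (by positivity), div_le_div_iff₀ (by positivity) (by positivity)]
      nlinarith
    push_cast
    linarith

lemma sum_nat_le (S : Finset ℕ) :
    ∑ k ∈ S, (1:ℝ)/((max k 1 : ℕ):ℝ)^2 ≤ 3 := by
  set N := S.sup id with hN
  have hsub : S ⊆ Finset.range (N+1) := fun x hx =>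
    Finset.mem_range.2 (Nat.lt_succ_of_le (Finset.le_sup (f := id) hx))
  have h1 : ∑ k ∈ S, (1:ℝ)/((max k 1 : ℕ):ℝ)^2
      ≤ ∑ k ∈ Finset.range (N+1), (1:ℝ)/((max k 1 : ℕ):ℝ)^2 :=
    Finset.sum_le_sum_of_subset_of_nonneg hsub (by intro i _ _; positivity)
  have h2 : ∑ k ∈ Finset.range (N+1), (1:ℝ)/((max k 1 : ℕ):ℝ)^2
      = (∑ k ∈ Finset.range N, (1:ℝ)/((k:ℝ)+1)^2) + 1 := by
    rw [Finset.sum_range_succ']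
    have h0 : (1:ℝ)/((max 0 1:ℕ):ℝ)^2 = 1 := by norm_num
    rw [h0]
    congr 1
    apply Finset.sum_congr rfl
    intro k _
    have : max (k+1) 1 = k + 1 := by omega
    rw [this]; push_cast; ring_nf
  have h3 := sum_inv_sq_le N
  have h4 : (0:ℝ) ≤ 2/((N:ℝ)+1) := by positivity
  linarith

lemma sum_int_le (T : Finset ℤ) :
    ∑ z ∈ T, (1:ℝ)/((max z.natAbs 1 : ℕ):ℝ)^2 ≤ 6 := by
  classical
  rw [← Finset.sum_filter_add_sum_filter_not T (fun z => 0 ≤ z)]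
  have key : ∀ (U : Finset ℤ), (∀ x ∈ U, ∀ y ∈ U, x.natAbs = y.natAbs → x = y) →
      ∑ z ∈ U, (1:ℝ)/((max z.natAbs 1 : ℕ):ℝ)^2 ≤ 3 := by
    intro U hinj
    have := Finset.sum_image (f := fun k : ℕ => (1:ℝ)/((max k 1 : ℕ):ℝ)^2)
      (s := U) (g := Int.natAbs) hinj
    rw [← this]
    exact sum_nat_le _
  have h1 := key (T.filter (fun z => 0 ≤ z)) (by
    intro x hx y hy h
    simp only [Finset.mem_filter] at hx hy
    omega)
  have h2 := key (T.filter (fun z => ¬ 0 ≤ z)) (by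
    intro x hx y hy h
    simp only [Finset.mem_filter] at hx hy
    omega)
  linarith

lemma sum_wt_le {b : ℕ} (S : Finset (Fin b → ℤ)) :
    ∑ n ∈ S, (1:ℝ)/((wt n : ℕ):ℝ)^(2*b) ≤ 6^b := by
  classical
  simp only [wt, znorm]
  set T : Finset ℤ := S.biUnion (fun n => Finset.image n Finset.univ) with hT
  have hstep1 : ∀ n ∈ S, (1:ℝ)/((max (Finset.univ.sup fun t => ((n t).natAbs)) 1 : ℕ):ℝ)^(2*b)
      ≤ ∏ t : Fin b, (1:ℝ)/((max (n t).natAbs 1 : ℕ):ℝ)^2 := by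
    intro n _
    set w : ℕ := max (Finset.univ.sup fun t => ((n t).natAbs)) 1 with hw
    have hwpos : (0:ℝ) < (w:ℝ) := by
      have : 1 ≤ w := le_max_right _ _
      exact_mod_cast Nat.lt_of_lt_of_le Nat.zero_lt_one this
    have hprod : ∏ t : Fin b, ((max (n t).natAbs 1 : ℕ):ℝ)^2 ≤ ((w:ℝ))^(2*b) := by
      have : ∏ t : Fin b, ((max (n t).natAbs 1 : ℕ):ℝ)^2 ≤ ∏ _t : Fin b, ((w:ℝ))^2 := by
        apply Finset.prod_le_prod
        · intro t _; positivity
        · intro t _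
          have h1 : (n t).natAbs ≤ Finset.univ.sup fun t => ((n t).natAbs) :=
            Finset.le_sup (f := fun t => (n t).natAbs) (Finset.mem_univ t)
          have h2 : max (n t).natAbs 1 ≤ w := max_le_max h1 le_rfl
          have h2' : ((max (n t).natAbs 1 : ℕ):ℝ) ≤ (w:ℝ) := by exact_mod_cast h2
          exact pow_le_pow_left₀ (by positivity) h2' 2
      calc ∏ t : Fin b, ((max (n t).natAbs 1 : ℕ):ℝ)^2 ≤ ∏ _t : Fin b, ((w:ℝ))^2 := this
        _ = ((w:ℝ)^2)^b := by rw [Finset.prod_const, Finset.card_univ, Fintype.card_fin]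
        _ = ((w:ℝ))^(2*b) := by rw [← pow_mul]
    rw [Finset.prod_div_distrib, Finset.prod_const, Finset.card_univ, Fintype.card_fin, one_pow]
    apply div_le_div_of_nonneg_left (by norm_num) (by positivity) hprod
  have hstep2 : ∑ n ∈ S, ∏ t : Fin b, (1:ℝ)/((max (n t).natAbs 1 : ℕ):ℝ)^2 ≤ 6^b := by
    have hsub : S ⊆ Fintype.piFinset (fun _ : Fin b => T) := by
      intro n hn
      rw [Fintype.mem_piFinset]
      intro t
      exact Finset.mem_biUnion.2 ⟨n, hn, Finset.mem_image.2 ⟨t, Finset.mem_univ t, rfl⟩⟩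
    have h1 : ∑ n ∈ S, ∏ t : Fin b, (1:ℝ)/((max (n t).natAbs 1 : ℕ):ℝ)^2
        ≤ ∑ n ∈ Fintype.piFinset (fun _ : Fin b => T), ∏ t : Fin b, (1:ℝ)/((max (n t).natAbs 1 : ℕ):ℝ)^2 :=
      Finset.sum_le_sum_of_subset_of_nonneg hsub (by intro i _ _; positivity)
    have h2 : ∑ n ∈ Fintype.piFinset (fun _ : Fin b => T), ∏ t : Fin b, (1:ℝ)/((max (n t).natAbs 1 : ℕ):ℝ)^2
        = ∏ _t : Fin b, ∑ z ∈ T, (1:ℝ)/((max z.natAbs 1 : ℕ):ℝ)^2 := by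
      rw [Finset.prod_univ_sum]
    have h3 : ∏ _t : Fin b, ∑ z ∈ T, (1:ℝ)/((max z.natAbs 1 : ℕ):ℝ)^2 ≤ 6^b := by
      rw [Finset.prod_const, Finset.card_univ, Fintype.card_fin]
      apply pow_le_pow_left₀
      · apply Finset.sum_nonneg; intro i _; positivity
      · exact sum_int_le T
    linarith
  calc ∑ n ∈ S, (1:ℝ)/((max (Finset.univ.sup fun t => ((n t).natAbs)) 1 : ℕ):ℝ)^(2*b)
      ≤ ∑ n ∈ S, ∏ t : Fin b, (1:ℝ)/((max (n t).natAbs 1 : ℕ):ℝ)^2 := Finset.sum_le_sum hstep1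
    _ ≤ 6^b := hstep2



lemma decayCoef_def {b : ℕ} (B C : Finset (Site b)) (M : Site b → Site b → ℂ) (n : Fin b → ℤ) :
    decayCoef B C M n = ((((C.image Prod.fst) ×ˢ (B.image Prod.fst)).filter
      fun p => p.1 - p.2 = n).sup fun p => blockNorm B C M p.1 p.2) := rfl

lemma sNormSq_def {b : ℕ} (K0 s : ℝ) (B C : Finset (Site b)) (M : Site b → Site b → ℂ) :
    sNormSq K0 s B C M = K0 * ∑ n ∈ ((C.image Prod.fst) ×ˢ (B.image Prod.fst)).image
      (fun p => p.1 - p.2), (decayCoef B C M n : ℝ) ^ 2 * (wt n : ℝ) ^ (2 * s) := rfl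

/-- decay along lines (Lemma 3.8). The `(s+b)`-norms of the groups of
lines `M_{{i}}` (rows with spatial index `i`, all columns retained) control the
`s`-norm of `M`. The bound `m` plays the role of `max_{i ∈ proj C} ‖M_{{i}}‖_{s+b}`. -/
theorem sNorm_decay_along_lines
    (b : ℕ) (hb : 1 ≤ b) :
    ∃ K1 : ℝ, 0 < K1 ∧
      ∀ K0 : ℝ, 0 < K0 →
        ∀ (B C : Finset (Site b)) (M : Site b → Site b → ℂ) (s : ℝ), 0 ≤ s →
          ∀ m : ℝ, 0 ≤ m →
            (∀ i ∈ C.image Prod.fst,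
              sNorm K0 (s + b) B (C.filter fun k => k.1 = i) M ≤ m) →
            sNorm K0 s B C M ≤ K1 * m := by
  classical
  refine ⟨Real.sqrt (6^b), Real.sqrt_pos.2 (by positivity), ?_⟩
  intro K0 hK0 B C M s hs m hm hline
  set N : Finset (Fin b → ℤ) :=
    ((C.image Prod.fst) ×ˢ (B.image Prod.fst)).image (fun p => p.1 - p.2) with hNdef
  have claim : ∀ n ∈ N, (decayCoef B C M n : ℝ)^2 * (wt n : ℝ)^(2*s)
      ≤ (m^2/K0) * ((1:ℝ)/((wt n : ℕ):ℝ)^(2*b)) := by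
    intro n hn
    have hwt1 : (1:ℝ) ≤ (wt n : ℝ) := by
      exact_mod_cast (le_max_right (znorm n) 1 : 1 ≤ wt n)
    have hwtpos : (0:ℝ) < (wt n : ℝ) := lt_of_lt_of_le zero_lt_one hwt1
    have key : (decayCoef B C M n : ℝ)^2 * (wt n : ℝ)^(2*(s+(b:ℝ))) ≤ m^2/K0 := by
      obtain ⟨p, hpmem, hpe⟩ := Finset.mem_image.1 hn
      have hFne : ((((C.image Prod.fst) ×ˢ (B.image Prod.fst)).filter
          fun p => p.1 - p.2 = n)).Nonempty :=
        ⟨p, Finset.mem_filter.2 ⟨hpmem, hpe⟩⟩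
      obtain ⟨q, hqF, hsup⟩ := Finset.exists_mem_eq_sup _ hFne
        (fun p => blockNorm B C M p.1 p.2)
      have hd : decayCoef B C M n = blockNorm B C M q.1 q.2 :=
        (decayCoef_def B C M n).trans hsup
      obtain ⟨hqmem, hqe⟩ := Finset.mem_filter.1 hqF
      obtain ⟨hq1, hq2⟩ := Finset.mem_product.1 hqmem
      set Ci : Finset (Site b) := C.filter (fun k => k.1 = q.1) with hCi
      have hblock : blockNorm B C M q.1 q.2 = blockNorm B Ci M q.1 q.2 := by
        unfold blockNorm
        congr 1
        apply Finset.sum_congr rfl; intro a _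
        apply Finset.sum_congr rfl; intro a' _
        refine if_congr ?_ rfl rfl
        simp [hCi, Finset.mem_filter]
      have hq1' : q.1 ∈ Ci.image Prod.fst := by
        obtain ⟨k, hkC, hk1⟩ := Finset.mem_image.1 hq1
        exact Finset.mem_image.2 ⟨k, Finset.mem_filter.2 ⟨hkC, hk1⟩, hk1⟩
      have hqF' : q ∈ (((Ci.image Prod.fst) ×ˢ (B.image Prod.fst)).filter
          fun p => p.1 - p.2 = n) :=
        Finset.mem_filter.2 ⟨Finset.mem_product.2 ⟨hq1', hq2⟩, hqe⟩
      have hle1 := Finset.le_sup (f := fun p => blockNorm B Ci M p.1 p.2) hqF'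
      have hle2 := le_of_le_of_eq hle1 (decayCoef_def B Ci M n).symm
      have hle : blockNorm B Ci M q.1 q.2 ≤ decayCoef B Ci M n := hle2
      have hle' : (decayCoef B C M n : ℝ) ≤ (decayCoef B Ci M n : ℝ) := by
        rw [hd, hblock]; exact_mod_cast hle
      have hnNi : n ∈ ((Ci.image Prod.fst) ×ˢ (B.image Prod.fst)).image
          (fun p => p.1 - p.2) :=
        Finset.mem_image.2 ⟨q, Finset.mem_product.2 ⟨hq1', hq2⟩, hqe⟩
      have hsingle : (decayCoef B Ci M n : ℝ)^2 * (wt n : ℝ)^(2*(s+(b:ℝ)))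
          ≤ ∑ n' ∈ ((Ci.image Prod.fst) ×ˢ (B.image Prod.fst)).image (fun p => p.1 - p.2),
            (decayCoef B Ci M n' : ℝ)^2 * (wt n' : ℝ)^(2*(s+(b:ℝ))) :=
        Finset.single_le_sum
          (f := fun n' => (decayCoef B Ci M n' : ℝ)^2 * (wt n' : ℝ)^(2*(s+(b:ℝ))))
          (fun i _ => by positivity) hnNi
      have hCiSq : sNormSq K0 (s+(b:ℝ)) B Ci M ≤ m^2 := by
        have hsn := hline q.1 hq1
        have hnn : 0 ≤ sNormSq K0 (s+(b:ℝ)) B Ci M :=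
          mul_nonneg hK0.le (Finset.sum_nonneg fun i _ => by positivity)
        calc sNormSq K0 (s+(b:ℝ)) B Ci M
            = Real.sqrt (sNormSq K0 (s+(b:ℝ)) B Ci M)^2 := (Real.sq_sqrt hnn).symm
          _ ≤ m^2 := pow_le_pow_left₀ (Real.sqrt_nonneg _) hsn 2
      have hsumval : ∑ n' ∈ ((Ci.image Prod.fst) ×ˢ (B.image Prod.fst)).image (fun p => p.1 - p.2),
            (decayCoef B Ci M n' : ℝ)^2 * (wt n' : ℝ)^(2*(s+(b:ℝ)))
          ≤ m^2/K0 := by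
        rw [le_div_iff₀ hK0]
        have : sNormSq K0 (s+(b:ℝ)) B Ci M
            = K0 * ∑ n' ∈ ((Ci.image Prod.fst) ×ˢ (B.image Prod.fst)).image (fun p => p.1 - p.2),
              (decayCoef B Ci M n' : ℝ)^2 * (wt n' : ℝ)^(2*(s+(b:ℝ))) := sNormSq_def _ _ _ _ _
        nlinarith [hCiSq, this]
      have hmono : (decayCoef B C M n : ℝ)^2 ≤ (decayCoef B Ci M n : ℝ)^2 :=
        pow_le_pow_left₀ (by positivity) hle' 2
      have hrw : (0:ℝ) ≤ (wt n : ℝ)^(2*(s+(b:ℝ))) := Real.rpow_nonneg hwtpos.le _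
      nlinarith [hsingle, hsumval, mul_le_mul_of_nonneg_right hmono hrw]
    have hsplit : (wt n : ℝ)^(2*(s+(b:ℝ))) = (wt n : ℝ)^(2*s) * ((wt n : ℕ):ℝ)^(2*b) := by
      rw [show 2*(s+(b:ℝ)) = 2*s + ((2*b : ℕ):ℝ) by push_cast; ring,
        Real.rpow_add hwtpos, Real.rpow_natCast]
    rw [hsplit] at key
    have hy : (0:ℝ) < ((wt n : ℕ):ℝ)^(2*b) := by positivity
    rw [mul_one_div, le_div_iff₀ hy]
    calc (decayCoef B C M n : ℝ)^2 * (wt n : ℝ)^(2*s) * ((wt n : ℕ):ℝ)^(2*b)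
        = (decayCoef B C M n : ℝ)^2 * ((wt n : ℝ)^(2*s) * ((wt n : ℕ):ℝ)^(2*b)) := by ring
      _ ≤ m^2/K0 := key
  have h5 : sNormSq K0 s B C M ≤ m^2 * 6^b := by
    have h1 : ∑ n ∈ N, (decayCoef B C M n : ℝ)^2 * (wt n : ℝ)^(2*s)
        ≤ ∑ n ∈ N, (m^2/K0) * ((1:ℝ)/((wt n : ℕ):ℝ)^(2*b)) := Finset.sum_le_sum claim
    have h2 : sNormSq K0 s B C M
        = K0 * ∑ n ∈ N, (decayCoef B C M n : ℝ)^2 * (wt n : ℝ)^(2*s) := sNormSq_def _ _ _ _ _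
    have h3 : ∑ n ∈ N, (1:ℝ)/((wt n : ℕ):ℝ)^(2*b) ≤ 6^b := sum_wt_le N
    have h4 : ∑ n ∈ N, (m^2/K0) * ((1:ℝ)/((wt n : ℕ):ℝ)^(2*b))
        = (m^2/K0) * ∑ n ∈ N, (1:ℝ)/((wt n : ℕ):ℝ)^(2*b) := by rw [Finset.mul_sum]
    rw [h2]
    calc K0 * ∑ n ∈ N, (decayCoef B C M n : ℝ)^2 * (wt n : ℝ)^(2*s)
        ≤ K0 * ((m^2/K0) * ∑ n ∈ N, (1:ℝ)/((wt n : ℕ):ℝ)^(2*b)) := by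
          rw [← h4]; exact mul_le_mul_of_nonneg_left h1 hK0.le
      _ = m^2 * ∑ n ∈ N, (1:ℝ)/((wt n : ℕ):ℝ)^(2*b) := by field_simp
      _ ≤ m^2 * 6^b := mul_le_mul_of_nonneg_left h3 (by positivity)
  calc sNorm K0 s B C M = Real.sqrt (sNormSq K0 s B C M) := rfl
    _ ≤ Real.sqrt (m^2 * 6^b) := Real.sqrt_le_sqrt h5
    _ = Real.sqrt (6^b) * m := by
        rw [Real.sqrt_mul (sq_nonneg m), Real.sqrt_sq hm, mul_comm]


end NLSPaper
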